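/- Assume the continuum hypothesis 2^{ℵ₀} = ℵ₁. Let H = (V, E) be a graph with V ⊆ ω₂ × ω and with no infinite path, and let (p_α : α < ω₂) be a family of countable independent subsets of V. Then there exist a club C ⊆ ω₂ and a function f : ω₂ → ω₂ which is regressive on C ∩ S^{ω₂}_{ω₁} such that for all α, β ∈ C ∩ S^{ω₂}_{ω₁}, if f(α) = f(β) then p_α ∪ p_β is independent. -/

import Mathlib

noncomputable def omega2 : Ordinal := (Cardinal.aleph 2).ord

/-- `C` is a club in `κ`: a subset of `κ` that is unbounded in `κ` and closed,
i.e. it contains every limit ordinal `δ < κ` in which `C ∩ δ` is unbounded. -/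
def IsClubIn (C : Set Ordinal) (κ : Ordinal) : Prop :=
  C ⊆ Set.Iio κ ∧
  (∀ α < κ, ∃ β ∈ C, α < β) ∧
  (∀ δ < κ, Order.IsSuccLimit δ → (∀ α < δ, ∃ β ∈ C, α < β ∧ β < δ) → δ ∈ C)

/-- `S^{ω₂}_{ω₁}`: the set of ordinals below `ω₂` of cofinality `ω₁`. -/
noncomputable def Somega2omega1 : Set Ordinal :=
  {δ : Ordinal | δ < omega2 ∧ δ.cof = Cardinal.aleph 1}

/-- A set of vertices is independent if no two of its elements are adjacent. -/
def IsIndependent {α : Type*} (G : SimpleGraph α) (W : Set α) : Prop :=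
  ∀ x ∈ W, ∀ y ∈ W, ¬ G.Adj x y

/-- `G` has an infinite path: an injective sequence of vertices in which any two
consecutive vertices are adjacent. -/
def HasInfinitePath {α : Type*} (G : SimpleGraph α) : Prop :=
  ∃ f : ℕ → α, Function.Injective f ∧ ∀ n : ℕ, G.Adj (f n) (f (n + 1))

/-!
Since `G` has no infinite path, every nonempty set of vertices contains a vertex with only finitely
many neighbours inside it. Peeling such vertices off one at a time, transfinitely, orients `G` so
that every vertex `v` has a finite set `F v` of out-neighbours.

Under CH there are only `ℵ₁` countable subsets of `γ × ω` for `γ < ω₂`, so pairs of countable sets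
can be coded injectively by ordinals `< ω₂`, with the codes of pairs below `γ` bounded below `ω₂`.
Let `C` be the club of those `δ` closed under a function `H` such that `H γ` bounds the first
coordinates of `p_γ` and of its out-neighbours, and the codes of pairs below `γ`. For `δ ∈ C` of
cofinality `ω₁` let `f δ` code the part of `p_δ` below `δ` together with the out-neighbours below
`δ` of the part of `p_δ` above `δ`. A countable set below such a `δ` is bounded below `δ`, so `f` is
regressive.

Finally, let `f α = f β` with `α < β` and let `xy` be an edge with `x ∈ p_α`, `y ∈ p_β`; then `x`
lies below `β`. If `y` lies below `β` it belongs to `p_α`, and if `x` lies below `α` it belongs to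
`p_β`. Otherwise the edge is oriented either from `x`, whose out-neighbours lie below `β`, or from
`y`, whose out-neighbours below `β` lie below `α`.
-/

open Cardinal Set

universe u v

theorem aleph_one_power_aleph0_of_CH (hCH : (2 : Cardinal.{u}) ^ aleph 0 = aleph 1) :
    (aleph 1 : Cardinal.{v}) ^ ℵ₀ = aleph 1 := by
  have hc : (𝔠 : Cardinal.{v}) = aleph 1 := by
    apply Cardinal.lift_injective.{u}
    have := congrArg Cardinal.lift.{v} hCH
    simp only [aleph_zero, two_power_aleph0, lift_continuum, lift_aleph, Ordinal.lift_one] at this ⊢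
    exact this
  rw [← hc, continuum_power_aleph0]

theorem isRegular_aleph_two : (aleph 2 : Cardinal.{u}).IsRegular := by
  simpa [one_add_one_eq_two] using isRegular_aleph_add_one 1

theorem cof_omega2 : omega2.{u}.cof = aleph 2 := isRegular_aleph_two.cof_ord

theorem aleph0_lt_aleph_two : ℵ₀ < (aleph 2 : Cardinal.{u}) :=
  aleph0_lt_aleph_one.trans (aleph_lt_aleph.2 one_lt_two)

theorem aleph0_lt_cof_omega2 : ℵ₀ < omega2.{u}.cof :=
  cof_omega2 ▸ aleph0_lt_aleph_two

theorem card_le_aleph_one_of_lt_omega2 {γ : Ordinal.{u}} (hγ : γ < omega2) :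
    γ.card ≤ aleph 1 := by
  rwa [omega2, lt_ord, show (2 : Ordinal) = 1 + 1 by norm_num, ← succ_aleph,
    Order.lt_succ_iff] at hγ

theorem exists_lt_forall_lt_of_mk_lt_cof {s : Set Ordinal.{u}} {a : Ordinal.{u}}
    (hs : #s < (Ordinal.lift.{u + 1} a).cof) (hsa : ∀ x ∈ s, x < a) : ∃ η < a, ∀ x ∈ s, x < η :=
  ⟨sSup ((· + 1) '' s), Ordinal.sSup_add_one_lt_of_lt_cof hs hsa, fun x hx =>
    (lt_add_one x).trans_le <| le_csSup
      ⟨a, by rintro _ ⟨y, hy, rfl⟩; exact Order.add_one_le_of_lt (hsa y hy)⟩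
      (mem_image_of_mem _ hx)⟩

theorem exists_lt_forall_lt_of_countable {s : Set Ordinal.{u}} {a : Ordinal.{u}}
    (ha : ℵ₀ < a.cof) (hs : s.Countable) (hsa : ∀ x ∈ s, x < a) : ∃ η < a, ∀ x ∈ s, x < η := by
  refine exists_lt_forall_lt_of_mk_lt_cof ?_ hsa
  rw [← Ordinal.lift_cof]
  calc #s ≤ ℵ₀ := le_aleph0_iff_set_countable.2 hs
    _ = Cardinal.lift ℵ₀ := lift_aleph0.symm
    _ < Cardinal.lift a.cof := lift_lt.2 ha

theorem exists_lt_omega2_forall_lt {s : Set Ordinal.{u}} (hs : #s ≤ aleph 1)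
    (hsa : ∀ x ∈ s, x < omega2) : ∃ η < omega2, ∀ x ∈ s, x < η := by
  refine exists_lt_forall_lt_of_mk_lt_cof ?_ hsa
  rw [← Ordinal.lift_cof, cof_omega2]
  exact hs.trans_lt (by simp)

theorem isClubIn_closurePoints {c : Cardinal.{u}} (hc : c.IsRegular) (hc₀ : ℵ₀ < c)
    (H : Ordinal.{u} → Ordinal.{u}) (hH : ∀ γ < c.ord, H γ < c.ord) :
    IsClubIn {δ | δ < c.ord ∧ ∀ γ < δ, H γ < δ} c.ord := by
  set T : Ordinal.{u} → Ordinal.{u} := fun b => ⨆ γ : Iio b, H γ + 1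
  have hT : ∀ b < c.ord, T b < c.ord := by
    intro b hb
    refine Ordinal.lift_iSup_add_one_lt_of_lt_cof ?_ fun γ => hH γ (γ.2.trans hb)
    rw [lt_ord] at hb
    rw [Cardinal.mk_Iio_ordinal, ← Ordinal.lift_cof, hc.cof_ord, Cardinal.lift_lift,
      Cardinal.lift_lt]
    exact hb
  refine ⟨fun δ hδ => hδ.1, fun a ha => ⟨Ordinal.nfp T (a + 1), ⟨?_, fun γ hγ => ?_⟩, ?_⟩, ?_⟩
  · exact Ordinal.nfp_lt_ord (by rwa [hc.cof_ord]) hT ((isSuccLimit_ord hc.aleph0_le).add_one_lt ha)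
  · obtain ⟨n, hn⟩ := Ordinal.lt_nfp_iff.1 hγ
    calc H γ < T (T^[n] (a + 1)) := Ordinal.lt_iSup_add_one (fun γ : Iio _ => H γ) ⟨γ, hn⟩
      _ = T^[n + 1] (a + 1) := (Function.iterate_succ_apply' T n _).symm
      _ ≤ Ordinal.nfp T (a + 1) := Ordinal.iterate_le_nfp T _ _
  · exact (lt_add_one a).trans_le (Ordinal.le_nfp T _)
  · intro δ hδ _ hcof
    refine ⟨hδ, fun γ hγ => ?_⟩
    obtain ⟨β, hβ, hγβ, hβδ⟩ := hcof γ hγ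
    exact (hβ.2 γ hγβ).trans hβδ

def countableBelow (γ : Ordinal.{u}) : Set (Set (Ordinal.{u} × ℕ)) :=
  {A | A ⊆ Prod.fst ⁻¹' Iio γ ∧ A.Countable}

def pairsBelow (γ : Ordinal.{u}) : Set (Set (Ordinal.{u} × ℕ) × Set (Ordinal.{u} × ℕ)) :=
  countableBelow γ ×ˢ countableBelow γ

theorem pairsBelow_mono {γ η : Ordinal.{u}} (h : γ ≤ η) : pairsBelow γ ⊆ pairsBelow η := by
  have : countableBelow γ ⊆ countableBelow η := fun A hA =>
    ⟨fun z hz => (hA.1 hz).trans_le h, hA.2⟩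
  exact prod_mono this this

theorem exists_lt_mem_pairsBelow {δ : Ordinal.{u}} (hδ : ℵ₀ < δ.cof)
    {O : Set (Ordinal.{u} × ℕ) × Set (Ordinal.{u} × ℕ)} (hO : O ∈ pairsBelow δ) :
    ∃ γ < δ, O ∈ pairsBelow γ := by
  obtain ⟨⟨h₁, c₁⟩, ⟨h₂, c₂⟩⟩ := hO
  obtain ⟨γ, hγ, hbound⟩ := exists_lt_forall_lt_of_countable hδ ((c₁.union c₂).image Prod.fst)
    (by rintro _ ⟨z, hz | hz, rfl⟩ <;> [exact h₁ hz; exact h₂ hz])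
  exact ⟨γ, hγ, ⟨fun z hz => hbound _ ⟨z, .inl hz, rfl⟩, c₁⟩,
    ⟨fun z hz => hbound _ ⟨z, .inr hz, rfl⟩, c₂⟩⟩

theorem mk_pairsBelow_le (hCH : (aleph 1 : Cardinal.{u + 1}) ^ ℵ₀ = aleph 1) {γ : Ordinal.{u}}
    (hγ : γ < omega2) : #(pairsBelow γ) ≤ aleph 1 := by
  have hbase : #(Prod.fst ⁻¹' Iio γ : Set (Ordinal.{u} × ℕ)) ≤ aleph 1 :=
    calc #(Prod.fst ⁻¹' Iio γ : Set (Ordinal.{u} × ℕ))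
        ≤ #(Iio γ × ℕ) := mk_le_of_injective (f := fun z => (⟨z.1.1, z.2⟩, z.1.2))
          fun z z' h => by simpa [Prod.ext_iff, Subtype.ext_iff] using h
      _ ≤ aleph 1 := by
        rw [mk_prod, Cardinal.mk_Iio_ordinal, mk_nat, lift_aleph0, lift_lift]
        refine mul_le_of_le (aleph0_le_aleph 1) ?_ (aleph0_le_aleph 1)
        simpa using lift_le.2 (card_le_aleph_one_of_lt_omega2 hγ)
  have hsets : #(countableBelow γ) ≤ aleph 1 :=
    calc #(countableBelow γ) ≤ max #(Prod.fst ⁻¹' Iio γ : Set (Ordinal.{u} × ℕ)) ℵ₀ ^ ℵ₀ :=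
          (mk_le_mk_of_subset (t := {A | A ⊆ Prod.fst ⁻¹' Iio γ ∧ #A ≤ ℵ₀})
            fun A hA => ⟨hA.1, le_aleph0_iff_set_countable.2 hA.2⟩).trans
            (mk_bounded_subset_le _ _)
      _ ≤ aleph 1 ^ ℵ₀ := power_le_power_right (max_le hbase (aleph0_le_aleph 1))
      _ = aleph 1 := hCH
  rw [pairsBelow, mk_setProd]
  exact (mul_le_mul' hsets hsets).trans (mul_eq_self (aleph0_le_aleph 1)).le

theorem exists_code_injOn_pairsBelow (hCH : (aleph 1 : Cardinal.{u + 1}) ^ ℵ₀ = aleph 1) :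
    ∃ code : Set (Ordinal.{u} × ℕ) × Set (Ordinal.{u} × ℕ) → Ordinal.{u},
      InjOn code (pairsBelow omega2) ∧
      ∀ γ < omega2, ∃ η < omega2, ∀ O ∈ pairsBelow γ, code O < η := by
  classical
  have hω₂ : #(Iio omega2.{u}) = aleph 2 := by simp [Cardinal.mk_Iio_ordinal, omega2]
  have hcard : #(pairsBelow omega2.{u}) ≤ #(Iio omega2.{u}) :=
    calc #(pairsBelow omega2.{u}) ≤ #(⋃ γ : Iio omega2.{u}, pairsBelow γ.1) :=
          mk_le_mk_of_subset fun O hO => by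
            obtain ⟨γ, hγ, hOγ⟩ := exists_lt_mem_pairsBelow aleph0_lt_cof_omega2 hO
            exact mem_iUnion.2 ⟨⟨γ, hγ⟩, hOγ⟩
      _ ≤ #(Iio omega2.{u}) * ⨆ γ : Iio omega2.{u}, #(pairsBelow γ.1) := mk_iUnion_le _
      _ ≤ #(Iio omega2.{u}) * aleph 1 := by
          gcongr
          exact ciSup_le' fun γ => mk_pairsBelow_le hCH γ.2
      _ = #(Iio omega2.{u}) := by
          rw [hω₂]
          exact mul_eq_left (aleph0_le_aleph 2) (aleph_le_aleph.2 one_le_two) (aleph_pos 1).ne'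
  obtain ⟨e⟩ := (le_def _ _).1 hcard
  set code := fun O => if h : O ∈ pairsBelow omega2 then (e ⟨O, h⟩ : Ordinal) else 0
  refine ⟨code, fun O hO O' hO' h => ?_, fun γ hγ => ?_⟩
  · simp only [code, dif_pos hO, dif_pos hO'] at h
    exact congrArg Subtype.val (e.injective (Subtype.ext h))
  · obtain ⟨η, hη, hbound⟩ := exists_lt_omega2_forall_lt
      (mk_image_le.trans (mk_pairsBelow_le hCH hγ)) (s := code '' pairsBelow γ) <| by
        rintro _ ⟨O, hO, rfl⟩
        simp only [code, dif_pos (pairsBelow_mono hγ.le hO)]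
        exact (e _).2
    exact ⟨η, hη, fun O hO => hbound _ (mem_image_of_mem _ hO)⟩

section Orientation

variable {α : Type u} {G : SimpleGraph α}

theorem exists_finite_neighborSet_inter (hG : ¬ HasInfinitePath G) {W : Set α}
    (hW : W.Nonempty) : ∃ v ∈ W, (G.neighborSet v ∩ W).Finite := by
  classical
  by_contra! hinf
  have hstep : ∀ s : W × Finset α, ∃ w : W, G.Adj s.1 w ∧ (w : α) ∉ s.2 := fun s => by
    obtain ⟨w, ⟨hadj, hwW⟩, hws⟩ := ((hinf s.1 s.1.2).sdiff s.2.finite_toSet).nonempty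
    exact ⟨⟨w, hwW⟩, hadj, hws⟩
  choose next hadj hfresh using hstep
  let step : W × Finset α → W × Finset α := fun s => (next s, insert (next s : α) s.2)
  let σ : ℕ → W × Finset α := fun n => step^[n] (⟨hW.some, hW.some_mem⟩, {hW.some})
  have hσ : ∀ n, σ (n + 1) = step (σ n) := fun n => Function.iterate_succ_apply' _ _ _
  have hmem : ∀ n, ((σ n).1 : α) ∈ (σ n).2 := by
    rintro (_ | n)
    · exact Finset.mem_singleton_self _
    · rw [hσ]; exact Finset.mem_insert_self _ _
  have hmono : Monotone fun n => (σ n).2 :=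
    monotone_nat_of_le_succ fun n => by rw [hσ]; exact Finset.subset_insert _ _
  refine hG ⟨fun n => (σ n).1, Function.Injective.of_lt_imp_ne fun m n hmn heq => ?_, fun n => ?_⟩
  · obtain ⟨k, rfl⟩ := Nat.exists_eq_add_of_lt hmn
    apply hfresh (σ (m + k))
    have hlast : ((σ (m + k + 1)).1 : α) = next (σ (m + k)) := by rw [hσ]
    rw [← hlast, ← heq]
    exact hmono (Nat.le_add_right m k) (hmem m)
  · simp only [hσ]; exact hadj (σ n)

variable (G) in
noncomputable def peel [Nonempty α] : Ordinal.{u} → α :=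
  wellFounded_lt.fix fun η peel => Classical.epsilon fun v =>
    v ∈ {w | ∀ ζ (h : ζ < η), peel ζ h ≠ w} ∧
      (G.neighborSet v ∩ {w | ∀ ζ (h : ζ < η), peel ζ h ≠ w}).Finite

variable (G) in
def unpeeled [Nonempty α] (η : Ordinal.{u}) : Set α :=
  {w | ∀ ζ < η, peel G ζ ≠ w}

theorem unpeeled_anti [Nonempty α] : Antitone (unpeeled G) :=
  fun _ _ h _ hw ζ hζ => hw ζ (hζ.trans_le h)

theorem peel_spec [Nonempty α] (hG : ¬ HasInfinitePath G) {η : Ordinal.{u}}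
    (hη : (unpeeled G η).Nonempty) :
    peel G η ∈ unpeeled G η ∧ (G.neighborSet (peel G η) ∩ unpeeled G η).Finite := by
  rw [peel, WellFounded.fix_eq]
  exact Classical.epsilon_spec (exists_finite_neighborSet_inter hG hη)

theorem exists_unpeeled_eq_empty [Nonempty α] (hG : ¬ HasInfinitePath G) :
    ∃ η, unpeeled G η = ∅ := by
  by_contra! h
  exact not_injective_of_ordinal (peel G) <| .of_lt_imp_ne fun ζ η hζη =>
    (peel_spec hG (h η)).1 ζ hζη

theorem exists_finite_orientation (hG : ¬ HasInfinitePath G) :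
    ∃ F : α → Set α, (∀ v, (F v).Finite) ∧ (∀ v, F v ⊆ G.neighborSet v) ∧
      ∀ x y, G.Adj x y → y ∈ F x ∨ x ∈ F y := by
  cases isEmpty_or_nonempty α
  · exact ⟨fun _ => ∅, fun _ => finite_empty, fun _ => empty_subset _, fun x => isEmptyElim x⟩
  obtain ⟨η₀, hη₀⟩ := exists_unpeeled_eq_empty hG
  have hpeeled : ∀ v, ∃ η, v ∈ unpeeled G η ∧ peel G η = v := fun v => by
    have hex : ∃ ζ, peel G ζ = v := by
      by_contra! hne
      have hv : v ∈ unpeeled G η₀ := fun ζ _ => hne ζ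
      rwa [hη₀] at hv
    exact ⟨sInf {ζ | peel G ζ = v}, fun ζ hζ => (notMem_of_lt_csInf' hζ : ¬ _),
      csInf_mem hex⟩
  choose η hη hpeel using hpeeled
  refine ⟨fun v => G.neighborSet v ∩ unpeeled G (η v), fun v => ?_, fun v => inter_subset_left,
    fun x y hxy => ?_⟩
  · simpa [hpeel] using (peel_spec hG ⟨v, hη v⟩).2
  · rcases lt_trichotomy (η x) (η y) with h | h | h
    · exact .inl ⟨hxy, unpeeled_anti h.le (hη y)⟩
    · exact absurd (by rw [← hpeel x, ← hpeel y, h]) hxy.ne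
    · exact .inr ⟨hxy.symm, unpeeled_anti h.le (hη x)⟩

end Orientation

theorem IsIndependent.union {α : Type*} {G : SimpleGraph α} {P Q : Set α}
    (hP : IsIndependent G P) (hQ : IsIndependent G Q) (hPQ : ∀ x ∈ P, ∀ y ∈ Q, ¬ G.Adj x y) :
    IsIndependent G (P ∪ Q) := by
  rintro x (hx | hx) y (hy | hy) hxy
  exacts [hP x hx y hy hxy, hPQ x hx y hy hxy, hPQ y hy x hx hxy.symm, hQ x hx y hy hxy]

section Traces

variable {α : Type*} (ht : α → Ordinal.{u}) (F : α → Set α)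

def lowPart (P : Set α) (δ : Ordinal.{u}) : Set α :=
  {v ∈ P | ht v < δ}

def lowLinks (P : Set α) (δ : Ordinal.{u}) : Set α :=
  {x | ht x < δ ∧ ∃ y ∈ P, δ ≤ ht y ∧ x ∈ F y}

variable {ht F}

theorem isIndependent_union_of_lowPart_eq_of_lowLinks_eq {G : SimpleGraph α}
    (hF : ∀ x y, G.Adj x y → y ∈ F x ∨ x ∈ F y) {P Q : Set α} {a b : Ordinal.{u}}
    (hP : IsIndependent G P) (hQ : IsIndependent G Q)
    (hPb : ∀ x ∈ P, ht x < b ∧ ∀ y ∈ F x, ht y < b)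
    (hlow : lowPart ht P a = lowPart ht Q b) (hlinks : lowLinks ht F P a = lowLinks ht F Q b) :
    IsIndependent G (P ∪ Q) := by
  refine hP.union hQ fun x hx y hy hxy => ?_
  by_cases hyb : ht y < b
  · have hyP : y ∈ lowPart ht P a := hlow ▸ ⟨hy, hyb⟩
    exact hP x hx y hyP.1 hxy
  by_cases hxa : ht x < a
  · have hxQ : x ∈ lowPart ht Q b := hlow ▸ ⟨hx, hxa⟩
    exact hQ x hxQ.1 y hy hxy
  rcases hF x y hxy with hyx | hxy'
  · exact hyb ((hPb x hx).2 y hyx)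
  · have hxl : x ∈ lowLinks ht F P a := hlinks ▸ ⟨(hPb x hx).1, y, hy, not_lt.1 hyb, hxy'⟩
    exact hxa hxl.1

theorem lowLinks_subset {P : Set α} {δ : Ordinal.{u}} : lowLinks ht F P δ ⊆ ⋃ y ∈ P, F y :=
  fun _ ⟨_, _, hy, _, hx⟩ => mem_biUnion hy hx

variable (F) in
def trace (idx : α → Ordinal.{u} × ℕ) (P : Set α) (δ : Ordinal.{u}) :
    Set (Ordinal.{u} × ℕ) × Set (Ordinal.{u} × ℕ) :=
  (idx '' lowPart (fun v => (idx v).1) P δ, idx '' lowLinks (fun v => (idx v).1) F P δ)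

theorem trace_mem_pairsBelow (idx : α → Ordinal.{u} × ℕ) {P : Set α} (hP : P.Countable)
    (hF : ∀ y, (F y).Finite) (δ : Ordinal.{u}) : trace F idx P δ ∈ pairsBelow δ := by
  refine ⟨⟨?_, (hP.mono fun v hv => hv.1).image idx⟩, ⟨?_, ?_⟩⟩
  · rintro _ ⟨v, hv, rfl⟩; exact hv.2
  · rintro _ ⟨v, hv, rfl⟩; exact hv.1
  · exact ((hP.biUnion fun y _ => (hF y).countable).mono lowLinks_subset).image idx

theorem lowPart_eq_and_lowLinks_eq_of_trace_eq {idx : α → Ordinal.{u} × ℕ} {V P Q : Set α}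
    (hidx : InjOn idx V) (hFV : ∀ y, F y ⊆ V) (hPV : P ⊆ V) (hQV : Q ⊆ V) {a b : Ordinal.{u}}
    (h : trace F idx P a = trace F idx Q b) :
    lowPart (fun v => (idx v).1) P a = lowPart (fun v => (idx v).1) Q b ∧
      lowLinks (fun v => (idx v).1) F P a = lowLinks (fun v => (idx v).1) F Q b := by
  have hlinksV : ∀ (R : Set α) (δ : Ordinal.{u}), lowLinks (fun v => (idx v).1) F R δ ⊆ V :=
    fun _ _ => lowLinks_subset.trans (iUnion₂_subset fun y _ => hFV y)
  rw [trace, trace, Prod.mk.injEq] at h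
  exact ⟨(hidx.image_eq_image_iff (fun v hv => hPV hv.1) (fun v hv => hQV hv.1)).1 h.1,
    (hidx.image_eq_image_iff (hlinksV P a) (hlinksV Q b)).1 h.2⟩

end Traces

theorem exists_closing_function {α : Type*}
    (code : Set (Ordinal.{u} × ℕ) × Set (Ordinal.{u} × ℕ) → Ordinal.{u})
    (hcode : ∀ γ < omega2, ∃ η < omega2, ∀ O ∈ pairsBelow γ, code O < η)
    (ht : α → Ordinal.{u}) (F : α → Set α) (hF : ∀ y, (F y).Finite) (V : Set α)
    (hV : ∀ v ∈ V, ht v < omega2) (hFV : ∀ y, F y ⊆ V) (p : Ordinal.{u} → Set α)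
    (hp : ∀ γ < omega2, p γ ⊆ V ∧ (p γ).Countable) :
    ∃ H : Ordinal.{u} → Ordinal.{u}, ∀ γ < omega2, H γ < omega2 ∧
      (∀ x ∈ p γ, ht x < H γ ∧ ∀ y ∈ F x, ht y < H γ) ∧ ∀ O ∈ pairsBelow γ, code O < H γ := by
  suffices h : ∀ γ, ∃ η, γ < omega2 → η < omega2 ∧
      (∀ x ∈ p γ, ht x < η ∧ ∀ y ∈ F x, ht y < η) ∧ ∀ O ∈ pairsBelow γ, code O < η by
    choose H hH using h
    exact ⟨H, hH⟩
  intro γ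
  by_cases hγ : γ < omega2
  swap
  · exact ⟨0, fun h => absurd h hγ⟩
  obtain ⟨hpV, hpc⟩ := hp γ hγ
  obtain ⟨η₁, hη₁, h₁⟩ := exists_lt_forall_lt_of_countable
    (s := ht '' (p γ ∪ ⋃ x ∈ p γ, F x))
    aleph0_lt_cof_omega2
    ((hpc.union (hpc.biUnion fun x _ => (hF x).countable)).image ht) <| by
      rintro _ ⟨v, hv | hv, rfl⟩
      · exact hV v (hpV hv)
      · obtain ⟨x, -, hvx⟩ := mem_iUnion₂.1 hv
        exact hV v (hFV x hvx)
  obtain ⟨η₂, hη₂, h₂⟩ := hcode γ hγ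
  refine ⟨max η₁ η₂, fun _ => ⟨max_lt hη₁ hη₂, fun x hx => ⟨?_, fun y hy => ?_⟩,
    fun O hO => (h₂ O hO).trans_le (le_max_right _ _)⟩⟩
  · exact (h₁ _ ⟨x, .inl hx, rfl⟩).trans_le (le_max_left _ _)
  · exact (h₁ _ ⟨y, .inr (mem_biUnion hx hy), rfl⟩).trans_le (le_max_left _ _)

theorem exists_club_regressive_isIndependent_union {α : Type*}
    (hCH : (aleph 1 : Cardinal.{u + 1}) ^ ℵ₀ = aleph 1)
    (G : SimpleGraph α) (V : Set α) (idx : α → Ordinal.{u} × ℕ) (hidx : InjOn idx V)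
    (hV : ∀ v ∈ V, (idx v).1 < omega2) (hE : ∀ x y, G.Adj x y → x ∈ V ∧ y ∈ V)
    (hG : ¬ HasInfinitePath G) (p : Ordinal.{u} → Set α)
    (hp : ∀ γ < omega2, p γ ⊆ V ∧ (p γ).Countable ∧ IsIndependent G (p γ)) :
    ∃ C : Set Ordinal, ∃ f : Ordinal → Ordinal,
      IsClubIn C omega2 ∧
      (∀ a ∈ C ∩ Somega2omega1, f a < a) ∧
      (∀ a ∈ C ∩ Somega2omega1, ∀ b ∈ C ∩ Somega2omega1,
        f a = f b → IsIndependent G (p a ∪ p b)) := by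
  obtain ⟨F, hFfin, hFadj, hF⟩ := exists_finite_orientation hG
  obtain ⟨code, hinj, hcode⟩ := exists_code_injOn_pairsBelow hCH
  set ht : α → Ordinal := fun v => (idx v).1
  have hFV : ∀ y, F y ⊆ V := fun y x hx => (hE y x (hFadj y hx)).2
  obtain ⟨H, hH⟩ := exists_closing_function code hcode ht F hFfin V hV hFV p
    fun γ hγ => ⟨(hp γ hγ).1, (hp γ hγ).2.1⟩
  have htrace : ∀ δ < omega2, trace F idx (p δ) δ ∈ pairsBelow omega2 := fun δ hδ =>
    pairsBelow_mono hδ.le (trace_mem_pairsBelow idx (hp δ hδ).2.1 hFfin δ)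
  set C := {δ | δ < omega2 ∧ ∀ γ < δ, H γ < δ}
  have hcross : ∀ a ∈ C, ∀ b ∈ C, a < b →
      code (trace F idx (p a) a) = code (trace F idx (p b) b) → IsIndependent G (p a ∪ p b) := by
    intro a ha b hb hab heq
    obtain ⟨hlow, hlinks⟩ := lowPart_eq_and_lowLinks_eq_of_trace_eq hidx hFV (hp a ha.1).1
      (hp b hb.1).1 (hinj (htrace a ha.1) (htrace b hb.1) heq)
    refine isIndependent_union_of_lowPart_eq_of_lowLinks_eq hF (hp a ha.1).2.2 (hp b hb.1).2.2
      (fun x hx => ?_) hlow hlinks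
    have hHab := hb.2 a hab
    exact ⟨((hH a ha.1).2.1 x hx).1.trans hHab,
      fun y hy => (((hH a ha.1).2.1 x hx).2 y hy).trans hHab⟩
  refine ⟨C, fun δ => code (trace F idx (p δ) δ),
    isClubIn_closurePoints isRegular_aleph_two aleph0_lt_aleph_two H fun γ hγ => (hH γ hγ).1,
    ?_, ?_⟩
  · rintro δ ⟨hδC, -, hδ⟩
    obtain ⟨γ, hγ, hOγ⟩ := exists_lt_mem_pairsBelow (by rw [hδ]; exact aleph0_lt_aleph_one)
      (trace_mem_pairsBelow idx (hp δ hδC.1).2.1 hFfin δ)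
    exact ((hH γ (hγ.trans hδC.1)).2.2 _ hOγ).trans (hδC.2 γ hγ)
  · rintro a ⟨ha, -⟩ b ⟨hb, -⟩ heq
    rcases lt_trichotomy a b with h | rfl | h
    · exact hcross a ha b hb h heq
    · simpa using (hp a ha.1).2.2
    · exact union_comm (p a) (p b) ▸ hcross b hb a ha h heq.symm

-- The vertices and the indices of `p` are ordinals of possibly different universes.
theorem exists_injOn_omega2 :
    ∃ e : Ordinal.{u} → Ordinal.{v}, InjOn e (Iio omega2) ∧ MapsTo e (Iio omega2) (Iio omega2) := by
  classical
  obtain ⟨e⟩ := lift_mk_eq'.1 (by simp [Cardinal.mk_Iio_ordinal, omega2] :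
    Cardinal.lift.{v + 1} #(Iio omega2.{u}) = Cardinal.lift.{u + 1} #(Iio omega2.{v}))
  refine ⟨fun a => if h : a < omega2 then e ⟨a, h⟩ else 0, fun a ha b hb hab => ?_,
    fun a ha => ?_⟩
  · simp only [dif_pos (show a < omega2 from ha), dif_pos (show b < omega2 from hb)] at hab
    exact congrArg Subtype.val (e.injective (Subtype.ext hab))
  · simp only [dif_pos (show a < omega2 from ha)]
    exact (e _).2

/-- Assume CH.  Let `H = (V, E)` be a graph with `V ⊆ ω₂ × ω` and no infinite path, and
let `(p_α : α < ω₂)` be countable independent subsets of `V`.  Then there are a club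
`C ⊆ ω₂` and a function `f : ω₂ → ω₂` regressive on `C ∩ S^{ω₂}_{ω₁}` such that for all
`α, β ∈ C ∩ S^{ω₂}_{ω₁}`, if `f(α) = f(β)` then `p_α ∪ p_β` is independent. -/
theorem stmt10
    (hCH : (2 : Cardinal) ^ Cardinal.aleph 0 = Cardinal.aleph 1)
    (G : SimpleGraph (Ordinal × ℕ)) (V : Set (Ordinal × ℕ))
    (hV : ∀ p ∈ V, p.1 < omega2)
    (hE : ∀ x y : Ordinal × ℕ, G.Adj x y → x ∈ V ∧ y ∈ V)
    (hG : ¬ HasInfinitePath G)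
    (p : Ordinal → Set (Ordinal × ℕ))
    (hp : ∀ α < omega2, p α ⊆ V ∧ (p α).Countable ∧ IsIndependent G (p α)) :
    ∃ C : Set Ordinal, ∃ f : Ordinal → Ordinal,
      IsClubIn C omega2 ∧
      (∀ α ∈ C ∩ Somega2omega1, 0 < α → f α < α) ∧
      (∀ α ∈ C ∩ Somega2omega1, ∀ β ∈ C ∩ Somega2omega1,
        f α = f β → IsIndependent G (p α ∪ p β)) := by
  obtain ⟨e, he, hmaps⟩ := exists_injOn_omega2
  have hidx : InjOn (fun z : Ordinal × ℕ => (e z.1, z.2)) V := fun z hz z' hz' h => by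
    obtain ⟨h₁, h₂⟩ := Prod.ext_iff.1 h
    exact Prod.ext (he (hV z hz) (hV z' hz') h₁) h₂
  obtain ⟨C, f, hC, hreg, hind⟩ := exists_club_regressive_isIndependent_union
    (aleph_one_power_aleph0_of_CH hCH) G V _ hidx (fun z hz => hmaps (hV z hz)) hE hG p hp
  exact ⟨C, f, hC, fun α hα _ => hreg α hα, hind⟩
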